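/- (Range-based extension of RRPB) Fix γ ∈ (0,1], a finite index set T, symmetric matrices H_t ∈ ℝ^{d×d} (t ∈ T), λ₀ > 0, and one index with matrix H := H_t, H ≠ O. Let M₀* be optimal for λ₀ (M₀* ⪰ O minimizes P_{λ₀} over positive semi-definite matrices), and let M₀ be a symmetric matrix with ‖M₀* − M₀‖_F ≤ ε for some ε ≥ 0. Assume ⟨H, M₀⟩ − 2 + ‖H‖_F‖M₀‖_F > 0. Define λ_a := λ₀(‖M₀‖_F‖H‖_F − ⟨H, M₀⟩ + 2ε‖H‖_F)/(⟨H, M₀⟩ − 2 + ‖H‖_F‖M₀‖_F) and λ_b := λ₀(‖M₀‖_F‖H‖_F + ⟨H, M₀⟩)/(‖H‖_F‖M₀‖_F − ⟨H, M₀⟩ + 2 + 2ε‖H‖_F). Then for every λ > 0 with either λ_a < λ ≤ λ₀ or λ₀ ≤ λ < λ_b, every M_λ* optimal for λ satisfies ⟨H, M_λ*⟩ > 1 (i.e., the triplet belongs to R* for all such λ). -/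

import Mathlib

open scoped BigOperators
open scoped Matrix

/-- Frobenius inner product ⟨A,B⟩ = tr(Aᵀ B). -/
noncomputable def frob {d : ℕ} (A B : Matrix (Fin d) (Fin d) ℝ) : ℝ :=
  Matrix.trace (Aᵀ * B)

/-- Frobenius norm ‖A‖_F = √⟨A,A⟩. -/
noncomputable def frobNorm {d : ℕ} (A : Matrix (Fin d) (Fin d) ℝ) : ℝ :=
  Real.sqrt (frob A A)

/-- Smoothed hinge loss ℓ_γ. -/
noncomputable def shinge (γ x : ℝ) : ℝ :=
  if 1 < x then 0 else if 1 - γ ≤ x then (1 - x) ^ 2 / (2 * γ) else 1 - x - γ / 2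

/-- Derivative of the smoothed hinge loss ℓ_γ'. -/
noncomputable def shinge' (γ x : ℝ) : ℝ :=
  if 1 < x then 0 else if 1 - γ ≤ x then -(1 - x) / γ else -1

/-- Primal objective P_λ(M) = Σ_t ℓ_γ(⟨M,H_t⟩) + (λ/2)‖M‖_F². -/
noncomputable def Pobj {d : ℕ} {ι : Type*} (γ lam : ℝ) (T : Finset ι)
    (H : ι → Matrix (Fin d) (Fin d) ℝ) (M : Matrix (Fin d) (Fin d) ℝ) : ℝ :=
  (∑ t ∈ T, shinge γ (frob M (H t))) + lam / 2 * frobNorm M ^ 2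

/-- Gradient ∇P_λ(M) = Σ_t ℓ_γ'(⟨M,H_t⟩) H_t + λ M. -/
noncomputable def gradP {d : ℕ} {ι : Type*} (γ lam : ℝ) (T : Finset ι)
    (H : ι → Matrix (Fin d) (Fin d) ℝ) (M : Matrix (Fin d) (Fin d) ℝ) :
    Matrix (Fin d) (Fin d) ℝ :=
  (∑ t ∈ T, shinge' γ (frob M (H t)) • H t) + lam • M

/-!
Each objective is a convex loss plus `λ/2 ‖M‖²_F`, so it is `λ`-strongly convex and a minimizer
`M_λ*` over the convex PSD cone satisfies `P_λ(M) ≥ P_λ(M_λ*) + λ/2 ‖M - M_λ*‖²_F` for every PSD `M`.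
Testing this for `λ₀` at `M_λ*` and for `λ` at `M₀*` and adding confines `M_λ*` to the ball
`‖2λ M_λ* - (λ₀ + λ) M₀*‖_F ≤ |λ₀ - λ| ‖M₀*‖_F`. Cauchy–Schwarz, together with `‖M₀* - M₀‖_F ≤ ε`,
turns this into `2λ ⟨H, M_λ*⟩ ≥ (λ₀ + λ)(⟨H, M₀⟩ - ε‖H‖_F) - |λ₀ - λ| ‖H‖_F (‖M₀‖_F + ε)`,
and the right-hand side exceeds `2λ` when `λ_a < λ ≤ λ₀` and when `λ₀ ≤ λ < λ_b`.
-/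

section SmoothedHinge

variable {γ : ℝ}

lemma mul_one_sub_sub_le_shinge (hγ : 0 < γ) (x : ℝ) {a : ℝ} (ha₀ : 0 ≤ a) (ha₁ : a ≤ 1) :
    a * (1 - x) - γ * a ^ 2 / 2 ≤ shinge γ x := by
  unfold shinge
  split_ifs with h₁ h₂
  · nlinarith
  · rw [le_div_iff₀ (by positivity)]
    nlinarith [sq_nonneg (1 - x - γ * a)]
  · nlinarith [mul_nonneg (sub_nonneg.2 ha₁) (by linarith : (0:ℝ) ≤ 1 - x - γ),
      mul_nonneg hγ.le (sq_nonneg (1 - a))]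

lemma exists_shinge_eq (hγ : 0 < γ) (x : ℝ) :
    ∃ a ∈ Set.Icc (0 : ℝ) 1, shinge γ x = a * (1 - x) - γ * a ^ 2 / 2 := by
  unfold shinge
  split_ifs with h₁ h₂
  · exact ⟨0, by simp, by ring⟩
  · refine ⟨(1 - x) / γ, ⟨by bound, by rw [div_le_one hγ]; linarith⟩, ?_⟩
    field_simp
    ring
  · exact ⟨1, by simp, by ring⟩

-- `shinge γ x = max_{a ∈ [0,1]} (a (1 - x) - γ a² / 2)`, a supremum of affine functions of `x`.
lemma convexOn_shinge (hγ : 0 < γ) : ConvexOn ℝ Set.univ (shinge γ) := by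
  refine ⟨convex_univ, fun x _ y _ p q hp hq hpq => ?_⟩
  simp only [smul_eq_mul]
  obtain ⟨a, ⟨ha₀, ha₁⟩, ha⟩ := exists_shinge_eq hγ (p * x + q * y)
  have hsplit : a * (1 - (p * x + q * y)) - γ * a ^ 2 / 2
      = p * (a * (1 - x) - γ * a ^ 2 / 2) + q * (a * (1 - y) - γ * a ^ 2 / 2) := by
    linear_combination (γ * a ^ 2 / 2 - a) * hpq
  rw [ha, hsplit]
  gcongr <;> exact mul_one_sub_sub_le_shinge hγ _ ha₀ ha₁

end SmoothedHinge

section InnerProductSpace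

open Filter Topology
open scoped RealInnerProductSpace

variable {E : Type*} [NormedAddCommGroup E] [InnerProductSpace ℝ E] {s : Set E} {f : E → ℝ}
  {lam₀ lam ε : ℝ} {h x₀ n₀ x : E}

lemma StrongConvexOn.add_le_of_isMinOn {m : ℝ} {y : E} (hf : StrongConvexOn s m f)
    (hmin : IsMinOn f s x) (hx : x ∈ s) (hy : y ∈ s) :
    f x + m / 2 * ‖y - x‖ ^ 2 ≤ f y := by
  have key : ∀ t ∈ Set.Ioo (0 : ℝ) 1, f x + (1 - t) * (m / 2 * ‖y - x‖ ^ 2) ≤ f y := by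
    rintro t ⟨ht₀, ht₁⟩
    have hseg := hf.2 hx hy (sub_nonneg.2 ht₁.le) ht₀.le (sub_add_cancel 1 t)
    have hle := isMinOn_iff.1 hmin _ (hf.1 hx hy (sub_nonneg.2 ht₁.le) ht₀.le (sub_add_cancel 1 t))
    rw [norm_sub_rev] at hseg
    simp only [smul_eq_mul] at hseg
    have : t * (f x + (1 - t) * (m / 2 * ‖y - x‖ ^ 2)) ≤ t * f y := by nlinarith
    exact le_of_mul_le_mul_left this ht₀
  have hlim : Tendsto (fun t : ℝ => f x + (1 - t) * (m / 2 * ‖y - x‖ ^ 2)) (𝓝[>] 0)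
      (𝓝 (f x + (1 - 0) * (m / 2 * ‖y - x‖ ^ 2))) :=
    (Continuous.tendsto (by fun_prop) 0).mono_left nhdsWithin_le_nhds
  simpa using le_of_tendsto hlim (eventually_of_mem (Ioo_mem_nhdsGT one_pos) key)

lemma ConvexOn.strongConvexOn_add_sq_norm (hf : ConvexOn ℝ s f) (m : ℝ) :
    StrongConvexOn s m (fun v => f v + m / 2 * ‖v‖ ^ 2) :=
  strongConvexOn_iff_convex.2 (by simpa using hf)

lemma ConvexOn.norm_smul_sub_smul_le_of_isMinOn (hf : ConvexOn ℝ s f) (hlam : 0 ≤ lam)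
    (hmin₀ : IsMinOn (fun v => f v + lam₀ / 2 * ‖v‖ ^ 2) s x₀) (hx₀ : x₀ ∈ s)
    (hmin : IsMinOn (fun v => f v + lam / 2 * ‖v‖ ^ 2) s x) (hx : x ∈ s) :
    ‖(2 * lam) • x - (lam₀ + lam) • x₀‖ ≤ |lam₀ - lam| * ‖x₀‖ := by
  have h₀ := (hf.strongConvexOn_add_sq_norm lam₀).add_le_of_isMinOn hmin₀ hx₀ hx
  have h := (hf.strongConvexOn_add_sq_norm lam).add_le_of_isMinOn hmin hx hx₀
  rw [norm_sub_rev] at h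
  have hsum : lam * ‖x‖ ^ 2 - (lam₀ + lam) * ⟪x, x₀⟫ + lam₀ * ‖x₀‖ ^ 2 ≤ 0 := by
    rw [norm_sub_sq_real] at h₀ h
    linarith
  refine (sq_le_sq₀ (norm_nonneg _) (by positivity)).1 ?_
  rw [mul_pow, sq_abs, norm_sub_sq_real, norm_smul, norm_smul, real_inner_smul_left,
    real_inner_smul_right, mul_pow, mul_pow, Real.norm_eq_abs, Real.norm_eq_abs, sq_abs, sq_abs]
  nlinarith

lemma inner_sub_le_inner_of_norm_sub_le {a b : E} {r : ℝ} (c : E) (hab : ‖a - b‖ ≤ r) :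
    ⟪c, b⟫ - ‖c‖ * r ≤ ⟪c, a⟫ := by
  have := (abs_le.1 ((abs_real_inner_le_norm c (a - b)).trans
    (mul_le_mul_of_nonneg_left hab (norm_nonneg c)))).1
  rw [inner_sub_right] at this
  linarith

lemma ConvexOn.le_inner_of_isMinOn (hf : ConvexOn ℝ s f) (hlam₀ : 0 ≤ lam₀) (hlam : 0 ≤ lam)
    (hmin₀ : IsMinOn (fun v => f v + lam₀ / 2 * ‖v‖ ^ 2) s x₀) (hx₀ : x₀ ∈ s)
    (hmin : IsMinOn (fun v => f v + lam / 2 * ‖v‖ ^ 2) s x) (hx : x ∈ s)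
    (happrox : ‖x₀ - n₀‖ ≤ ε) :
    (lam₀ + lam) * (⟪h, n₀⟫ - ‖h‖ * ε) - ‖h‖ * |lam₀ - lam| * (‖n₀‖ + ε) ≤ 2 * lam * ⟪h, x⟫ := by
  have hball := inner_sub_le_inner_of_norm_sub_le h
    (hf.norm_smul_sub_smul_le_of_isMinOn hlam hmin₀ hx₀ hmin hx)
  rw [real_inner_smul_right, real_inner_smul_right] at hball
  have hinner : (lam₀ + lam) * (⟪h, n₀⟫ - ‖h‖ * ε) ≤ (lam₀ + lam) * ⟪h, x₀⟫ :=
    mul_le_mul_of_nonneg_left (inner_sub_le_inner_of_norm_sub_le h happrox) (by positivity)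
  have hnorm : ‖h‖ * |lam₀ - lam| * ‖x₀‖ ≤ ‖h‖ * |lam₀ - lam| * (‖n₀‖ + ε) :=
    mul_le_mul_of_nonneg_left (by linarith [norm_sub_norm_le x₀ n₀]) (by positivity)
  linarith

theorem ConvexOn.one_lt_inner_of_isMinOn (hf : ConvexOn ℝ s f) (hlam₀ : 0 < lam₀)
    (hlam : 0 < lam) (hε : 0 ≤ ε)
    (hmin₀ : IsMinOn (fun v => f v + lam₀ / 2 * ‖v‖ ^ 2) s x₀) (hx₀ : x₀ ∈ s)
    (hmin : IsMinOn (fun v => f v + lam / 2 * ‖v‖ ^ 2) s x) (hx : x ∈ s)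
    (happrox : ‖x₀ - n₀‖ ≤ ε) (hpos : ⟪h, n₀⟫ - 2 + ‖h‖ * ‖n₀‖ > 0)
    (hrange : (lam₀ * (‖n₀‖ * ‖h‖ - ⟪h, n₀⟫ + 2 * ε * ‖h‖) / (⟪h, n₀⟫ - 2 + ‖h‖ * ‖n₀‖) < lam ∧
        lam ≤ lam₀) ∨
      (lam₀ ≤ lam ∧
        lam < lam₀ * (‖n₀‖ * ‖h‖ + ⟪h, n₀⟫) / (‖h‖ * ‖n₀‖ - ⟪h, n₀⟫ + 2 + 2 * ε * ‖h‖))) :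
    1 < ⟪h, x⟫ := by
  have hlower := hf.le_inner_of_isMinOn (h := h) hlam₀.le hlam.le hmin₀ hx₀ hmin hx happrox
  suffices 2 * lam * 1 < 2 * lam * ⟪h, x⟫ from lt_of_mul_lt_mul_left this (by positivity)
  have hεh : 0 ≤ ‖h‖ * ε := by positivity
  rcases hrange with ⟨hA, hle⟩ | ⟨hle, hB⟩
  · rw [div_lt_iff₀ hpos] at hA
    rw [abs_of_nonneg (sub_nonneg.2 hle)] at hlower
    linarith
  · have hden : 0 < ‖h‖ * ‖n₀‖ - ⟪h, n₀⟫ + 2 + 2 * ε * ‖h‖ := by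
      linarith [real_inner_le_norm h n₀]
    rw [lt_div_iff₀ hden] at hB
    rw [abs_of_nonpos (sub_nonpos.2 hle)] at hlower
    linarith

end InnerProductSpace

section Frobenius

open scoped RealInnerProductSpace

lemma convexOn_sum_shinge_inner {E ι : Type*} [NormedAddCommGroup E] [InnerProductSpace ℝ E]
    {γ : ℝ} (hγ : 0 < γ) (T : Finset ι) (a : ι → E) :
    ConvexOn ℝ Set.univ (fun v => ∑ t ∈ T, shinge γ ⟪v, a t⟫) := by
  rw [← Finset.sum_fn]
  refine Finset.sum_induction _ (ConvexOn ℝ Set.univ) (fun _ _ => ConvexOn.add)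
    (convexOn_const 0 convex_univ) fun t _ => ?_
  exact (convexOn_shinge hγ).comp_linearMap ((innerₛₗ ℝ).flip (a t))

lemma convex_setOf_posSemidef {n : Type*} [Fintype n] :
    Convex ℝ {A : Matrix n n ℝ | A.PosSemidef} :=
  fun _ hA _ hB _ _ ha hb _ => (hA.smul ha).add (hB.smul hb)

def Matrix.euclideanVec {m n : Type*} : Matrix m n ℝ →ₗ[ℝ] EuclideanSpace ℝ (n × m) where
  toFun A := WithLp.toLp 2 A.vec
  map_add' A B := by rw [Matrix.vec_add, WithLp.toLp_add]
  map_smul' c A := by rw [Matrix.vec_smul, WithLp.toLp_smul, RingHom.id_apply]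

lemma frob_eq_inner {d : ℕ} (A B : Matrix (Fin d) (Fin d) ℝ) :
    frob A B = ⟪A.euclideanVec, B.euclideanVec⟫ := by
  rw [frob, ← Matrix.vec_dotProduct_vec, Matrix.euclideanVec, LinearMap.coe_mk, AddHom.coe_mk,
    EuclideanSpace.inner_toLp_toLp, star_trivial, dotProduct_comm]

lemma frobNorm_eq_norm {d : ℕ} (A : Matrix (Fin d) (Fin d) ℝ) :
    frobNorm A = ‖A.euclideanVec‖ := by
  rw [frobNorm, frob_eq_inner, real_inner_self_eq_norm_sq, Real.sqrt_sq (norm_nonneg _)]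

lemma isMinOn_euclideanVec_of_forall_Pobj_le {d : ℕ} {ι : Type*} {γ lam : ℝ} {T : Finset ι}
    {H : ι → Matrix (Fin d) (Fin d) ℝ} {Mstar : Matrix (Fin d) (Fin d) ℝ}
    (hopt : ∀ M : Matrix (Fin d) (Fin d) ℝ, M.PosSemidef →
      Pobj γ lam T H Mstar ≤ Pobj γ lam T H M) :
    IsMinOn (fun v => (∑ t ∈ T, shinge γ ⟪v, (H t).euclideanVec⟫) + lam / 2 * ‖v‖ ^ 2)
      (Matrix.euclideanVec '' {M | M.PosSemidef}) Mstar.euclideanVec := by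
  refine isMinOn_iff.2 ?_
  rintro _ ⟨M, hM, rfl⟩
  simpa only [Pobj, frob_eq_inner, frobNorm_eq_norm] using hopt M hM

end Frobenius

theorem rrpb_range_general {d : ℕ} {ι : Type*} (γ lam0 : ℝ)
    (hγ : 0 < γ) (hlam0 : 0 < lam0)
    (T : Finset ι) (H : ι → Matrix (Fin d) (Fin d) ℝ)
    (t0 : ι)
    (M0star M0 : Matrix (Fin d) (Fin d) ℝ) (ε : ℝ) (hε : 0 ≤ ε)
    (hM0star : M0star.PosSemidef)
    (hopt0 : ∀ M' : Matrix (Fin d) (Fin d) ℝ, M'.PosSemidef →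
      Pobj γ lam0 T H M0star ≤ Pobj γ lam0 T H M')
    (happrox : frobNorm (M0star - M0) ≤ ε)
    (hpos : frob (H t0) M0 - 2 + frobNorm (H t0) * frobNorm M0 > 0) :
    let lamA := lam0 * (frobNorm M0 * frobNorm (H t0) - frob (H t0) M0 +
        2 * ε * frobNorm (H t0)) /
      (frob (H t0) M0 - 2 + frobNorm (H t0) * frobNorm M0)
    let lamB := lam0 * (frobNorm M0 * frobNorm (H t0) + frob (H t0) M0) /
      (frobNorm (H t0) * frobNorm M0 - frob (H t0) M0 + 2 + 2 * ε * frobNorm (H t0))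
    ∀ lam : ℝ, 0 < lam →
      ((lamA < lam ∧ lam ≤ lam0) ∨ (lam0 ≤ lam ∧ lam < lamB)) →
      ∀ Mlamstar : Matrix (Fin d) (Fin d) ℝ, Mlamstar.PosSemidef →
        (∀ M' : Matrix (Fin d) (Fin d) ℝ, M'.PosSemidef →
          Pobj γ lam T H Mlamstar ≤ Pobj γ lam T H M') →
        frob (H t0) Mlamstar > 1 := by
  intro lamA lamB lam hlam hrange Mlamstar hMlamstar hopt
  have hf := (convexOn_sum_shinge_inner hγ T fun t => (H t).euclideanVec).subset
    (Set.subset_univ _) (convex_setOf_posSemidef.linear_image Matrix.euclideanVec)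
  simp only [lamA, lamB, frob_eq_inner, frobNorm_eq_norm, map_sub] at hrange hpos happrox ⊢
  exact hf.one_lt_inner_of_isMinOn hlam0 hlam hε (isMinOn_euclideanVec_of_forall_Pobj_le hopt0)
    ⟨_, hM0star, rfl⟩ (isMinOn_euclideanVec_of_forall_Pobj_le hopt) ⟨_, hMlamstar, rfl⟩
    happrox hpos hrange

/-- Range-based extension of RRPB. -/
theorem rrpb_range {d : ℕ} {ι : Type*} (γ lam0 : ℝ)
    (hγ : 0 < γ) (hγ1 : γ ≤ 1) (hlam0 : 0 < lam0)
    (T : Finset ι) (H : ι → Matrix (Fin d) (Fin d) ℝ)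
    (hH : ∀ t ∈ T, (H t).IsSymm)
    (t0 : ι) (ht0 : t0 ∈ T) (hH0 : H t0 ≠ 0)
    (M0star M0 : Matrix (Fin d) (Fin d) ℝ) (ε : ℝ) (hε : 0 ≤ ε)
    (hM0star : M0star.PosSemidef)
    (hopt0 : ∀ M' : Matrix (Fin d) (Fin d) ℝ, M'.PosSemidef →
      Pobj γ lam0 T H M0star ≤ Pobj γ lam0 T H M')
    (hM0 : M0.IsSymm) (happrox : frobNorm (M0star - M0) ≤ ε)
    (hpos : frob (H t0) M0 - 2 + frobNorm (H t0) * frobNorm M0 > 0) :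
    let lamA := lam0 * (frobNorm M0 * frobNorm (H t0) - frob (H t0) M0 +
        2 * ε * frobNorm (H t0)) /
      (frob (H t0) M0 - 2 + frobNorm (H t0) * frobNorm M0)
    let lamB := lam0 * (frobNorm M0 * frobNorm (H t0) + frob (H t0) M0) /
      (frobNorm (H t0) * frobNorm M0 - frob (H t0) M0 + 2 + 2 * ε * frobNorm (H t0))
    ∀ lam : ℝ, 0 < lam →
      ((lamA < lam ∧ lam ≤ lam0) ∨ (lam0 ≤ lam ∧ lam < lamB)) →
      ∀ Mlamstar : Matrix (Fin d) (Fin d) ℝ, Mlamstar.PosSemidef →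
        (∀ M' : Matrix (Fin d) (Fin d) ℝ, M'.PosSemidef →
          Pobj γ lam T H Mlamstar ≤ Pobj γ lam T H M') →
        frob (H t0) Mlamstar > 1 :=
  rrpb_range_general γ lam0 hγ hlam0 T H t0 M0star M0 ε hε hM0star hopt0 happrox hpos
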